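/- arXiv:1804.03688 — 2 statements merged into one kernel-verified Lean document; each statement's English description precedes it below -/
import Mathlib

section
/- For the triangle T with vertices (0,-1), (0,1), (1,0) and the convex function f(x,y) = x, the average of f over T is strictly greater than the average of f over the boundary of T; explicitly, the average over T equals 1/3 while the average over ∂T equals 1 - √2/2, and 1/3 > 1 - √2/2. Hence the 45-45-90 triangle is not of Jensen-type. -/
/-!
Over the triangle `0 ≤ x`, `|y| ≤ 1 - x`, the section at abscissa `x ∈ [0, 1]` has length
`2 - 2x`, so the triangle has area `1` and `∫ x = ∫₀¹ x (2 - 2x) dx = 1/3`. Its frontier is the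
union of the three sides, which are the faces where one of the defining inequalities is an
equality. On a segment `[a, b]` the measure `μH[1]` is `dist a b` times the image of Lebesgue
measure on `[0, 1]` under `t ↦ a + t • (b - a)`, so a linear function integrates to `dist a b`
times its value at the midpoint. The sides have lengths `2, √2, √2` and midpoint abscissae
`0, 1/2, 1/2`, which gives the boundary average `√2 / (2 + 2√2) = 1 - √2/2 < 1/3`.
-/

open MeasureTheory Set
open scoped ENNReal

/-- A compact convex set `X ⊆ ℝⁿ` with nonempty interior is of *Jensen type* if for every
convex function `f : X → ℝ` the Lebesgue average of `f` over `X` is at most the average of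
`f` over the boundary `∂X` with respect to `(n-1)`-dimensional Hausdorff measure. -/
def IsJensenType {n : ℕ} (X : Set (EuclideanSpace ℝ (Fin n))) : Prop :=
  ∀ f : EuclideanSpace ℝ (Fin n) → ℝ, ConvexOn ℝ X f →
    ⨍ x in X, f x ≤ ⨍ x in frontier X, f x ∂(μH[(n : ℝ) - 1])

theorem convexHull_insert_pair_inter_eq_segment {E : Type*} [AddCommGroup E] [Module ℝ E]
    (ℓ : E →ₗ[ℝ] ℝ) {a b c : E} {m : ℝ} (ha : ℓ a = m) (hb : ℓ b = m) (hc : ℓ c ≠ m) :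
    convexHull ℝ {c, a, b} ∩ {p | ℓ p = m} = segment ℝ a b := by
  have hseg : ∀ x ∈ segment ℝ a b, ℓ x = m := by
    rintro x ⟨s, t, hs, ht, hst, rfl⟩
    simp [ha, hb, ← add_mul, hst]
  apply Subset.antisymm
  · rintro p ⟨hp, hℓp⟩
    rw [convexHull_insert (insert_nonempty a {b}), convexHull_pair, convexJoin_singleton_left,
      mem_iUnion₂] at hp
    obtain ⟨x, hx, s, t, hs, ht, hst, rfl⟩ := hp
    have hs0 : s = 0 := by
      simp only [mem_ofPred_eq, map_add, map_smul, smul_eq_mul, hseg x hx] at hℓp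
      have : s * (m - ℓ c) = 0 := by linear_combination m * hst - hℓp
      exact (mul_eq_zero.1 this).resolve_right (sub_ne_zero.2 hc.symm)
    simpa [hs0, show t = 1 by linarith] using hx
  · exact fun x hx => ⟨segment_subset_convexHull (by simp) (by simp) hx, hseg x hx⟩

theorem ContinuousLinearMap.interior_preimage_of_apply_eq_one {E : Type*}
    [NormedAddCommGroup E] [NormedSpace ℝ E] [CompleteSpace E] {ℓ : E →L[ℝ] ℝ} {v : E}
    (hv : ℓ v = 1) (s : Set ℝ) : interior (ℓ ⁻¹' s) = ℓ ⁻¹' interior s :=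
  ℓ.interior_preimage (fun r => ⟨r • v, by simp [hv]⟩) s

section Segment
variable {E : Type*} [NormedAddCommGroup E] [NormedSpace ℝ E] [MeasurableSpace E] [BorelSpace E]

theorem restrict_hausdorffMeasure_segment (a b : E) :
    (μH[1] : Measure E).restrict (segment ℝ a b) =
      nndist a b • (volume.restrict (Icc (0 : ℝ) 1)).map (AffineMap.lineMap a b) := by
  have hφ : Measurable (AffineMap.lineMap a b : ℝ → E) := AffineMap.lineMap_continuous.measurable
  ext A hA
  rw [Measure.restrict_apply hA, Measure.smul_apply, Measure.map_apply hφ hA,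
    Measure.restrict_apply (hφ hA), segment_eq_image_lineMap, inter_comm, ← image_inter_preimage,
    hausdorffMeasure_lineMap_image, hausdorffMeasure_real, inter_comm]

theorem integral_segment_hausdorffMeasure {g : E → ℝ} (hg : Continuous g) (a b : E) :
    ∫ x in segment ℝ a b, g x ∂μH[1] =
      dist a b * ∫ t in (0 : ℝ)..1, g (AffineMap.lineMap a b t) := by
  rw [restrict_hausdorffMeasure_segment, integral_smul_nnreal_measure,
    integral_map AffineMap.lineMap_continuous.aemeasurable hg.aestronglyMeasurable,
    intervalIntegral.integral_of_le zero_le_one, integral_Icc_eq_integral_Ioc, NNReal.smul_def,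
    coe_nndist, smul_eq_mul]

theorem integrableOn_segment_hausdorffMeasure {g : E → ℝ} (hg : Continuous g) (a b : E) :
    IntegrableOn g (segment ℝ a b) μH[1] := by
  rw [IntegrableOn, restrict_hausdorffMeasure_segment]
  refine Integrable.smul_measure ?_ ENNReal.coe_ne_top
  exact (integrable_map_measure hg.aestronglyMeasurable AffineMap.lineMap_continuous.aemeasurable).2
    (hg.comp AffineMap.lineMap_continuous).integrableOn_Icc

theorem integral_segment_hausdorffMeasure_clm (ℓ : E →L[ℝ] ℝ) (a b : E) :
    ∫ x in segment ℝ a b, ℓ x ∂μH[1] = dist a b * ((ℓ a + ℓ b) / 2) := by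
  rw [integral_segment_hausdorffMeasure ℓ.continuous]
  congr 1
  have hline : ∀ t : ℝ, ℓ (AffineMap.lineMap a b t) = ℓ a + t * (ℓ b - ℓ a) := fun t => by
    simp [AffineMap.lineMap_apply_module]
    ring
  simp_rw [hline]
  rw [intervalIntegral.integral_add intervalIntegrable_const
    (Continuous.intervalIntegrable (by fun_prop) _ _)]
  simp [intervalIntegral.integral_mul_const]
  ring

theorem measurableSet_segment (a b : E) : MeasurableSet (segment ℝ a b) := by
  rw [segment_eq_image_lineMap]
  exact (isCompact_Icc.image AffineMap.lineMap_continuous).isClosed.measurableSet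

theorem measureReal_hausdorffMeasure_segment (a b : E) :
    (μH[1] : Measure E).real (segment ℝ a b) = dist a b := by
  simp [measureReal_def, edist_dist]

end Segment

theorem setIntegral_prod_eq_integral_sections {α β E : Type*} [MeasurableSpace α]
    [MeasurableSpace β] [NormedAddCommGroup E] [NormedSpace ℝ E] {μ : Measure α} {ν : Measure β}
    [SFinite μ] [SFinite ν] {S : Set (α × β)} (hS : MeasurableSet S) {F : α × β → E}
    (hF : IntegrableOn F S (μ.prod ν)) :
    ∫ z in S, F z ∂μ.prod ν = ∫ x, ∫ y in Prod.mk x ⁻¹' S, F (x, y) ∂ν ∂μ := by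
  rw [← integral_indicator hS, integral_prod _ (hF.integrable_indicator hS)]
  congr 1 with x
  rw [← integral_indicator (measurable_prodMk_left hS)]
  rfl

def triangle : Set (ℝ × ℝ) := {q | 0 ≤ q.1 ∧ q.1 + q.2 ≤ 1 ∧ q.1 - q.2 ≤ 1}

theorem isCompact_triangle : IsCompact triangle := by
  refine (isCompact_Icc.prod isCompact_Icc : IsCompact (Icc (0 : ℝ) 1 ×ˢ Icc (-1 : ℝ) 1))
    |>.of_isClosed_subset ?_ ?_
  · exact ((isClosed_le continuous_const continuous_fst).inter
      ((isClosed_le (continuous_fst.add continuous_snd) continuous_const).inter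
        (isClosed_le (continuous_fst.sub continuous_snd) continuous_const)))
  · rintro ⟨x, y⟩ ⟨h₁, h₂, h₃⟩
    exact ⟨⟨h₁, by linarith⟩, by linarith, by linarith⟩

theorem setIntegral_triangle {F : ℝ × ℝ → ℝ} (hF : Continuous F) :
    ∫ q in triangle, F q = ∫ x in (0 : ℝ)..1, ∫ y in (x - 1)..(1 - x), F (x, y) := by
  rw [Measure.volume_eq_prod, setIntegral_prod_eq_integral_sections
    isCompact_triangle.measurableSet (hF.continuousOn.integrableOn_compact isCompact_triangle),
    intervalIntegral.integral_of_le zero_le_one, ← integral_Icc_eq_integral_Ioc,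
    ← setIntegral_eq_integral_of_forall_compl_eq_zero]
  · refine setIntegral_congr_fun measurableSet_Icc fun x ⟨hx₀, hx₁⟩ => ?_
    have : Prod.mk x ⁻¹' triangle = Icc (x - 1) (1 - x) := by
      ext y; simp only [triangle, mem_preimage, mem_ofPred_eq, mem_Icc]
      constructor
      · rintro ⟨-, h₂, h₃⟩; constructor <;> linarith
      · rintro ⟨h₂, h₃⟩; exact ⟨hx₀, by linarith, by linarith⟩
    rw [this, intervalIntegral.integral_of_le (by linarith), integral_Icc_eq_integral_Ioc]
  · intro x hx
    have : Prod.mk x ⁻¹' triangle = ∅ := by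
      ext y; simp only [triangle, mem_preimage, mem_ofPred_eq, mem_empty_iff_false, iff_false]
      rintro ⟨h₁, h₂, h₃⟩; exact hx ⟨h₁, by linarith⟩
    rw [this, Measure.restrict_empty, integral_zero_measure]

theorem setIntegral_triangle_fst : ∫ q in triangle, q.1 = 1 / 3 := by
  rw [setIntegral_triangle continuous_fst]
  simp only [intervalIntegral.integral_const, smul_eq_mul]
  have : ∀ x : ℝ, (1 - x - (x - 1)) * x = x * 2 - x ^ 2 * 2 := fun x => by ring
  simp_rw [this]
  rw [intervalIntegral.integral_sub (Continuous.intervalIntegrable (by fun_prop) _ _)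
    (Continuous.intervalIntegrable (by fun_prop) _ _)]
  simp [intervalIntegral.integral_mul_const]
  norm_num

theorem measureReal_triangle : volume.real triangle = 1 := by
  have h := setIntegral_triangle (F := fun _ => (1 : ℝ)) continuous_const
  simp only [setIntegral_const, smul_eq_mul, mul_one, intervalIntegral.integral_const] at h
  rw [h]
  have : ∀ x : ℝ, (1 - x - (x - 1)) = 2 - x * 2 := fun x => by ring
  simp_rw [this]
  rw [intervalIntegral.integral_sub (Continuous.intervalIntegrable (by fun_prop) _ _)
    (Continuous.intervalIntegrable (by fun_prop) _ _)]
  simp [intervalIntegral.integral_mul_const]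
  norm_num

local notation "ℝ²" => EuclideanSpace ℝ (Fin 2)

def toProd : ℝ² ≃ᵐ ℝ × ℝ := (MeasurableEquiv.toLp 2 (Fin 2 → ℝ)).symm.trans .finTwoArrow

theorem toProd_apply (p : ℝ²) : toProd p = (p 0, p 1) := rfl

theorem measurePreserving_toProd : MeasurePreserving toProd :=
  (volume_preserving_finTwoArrow ℝ).comp
    (EuclideanSpace.volume_preserving_symm_measurableEquiv_toLp _)

open EuclideanSpace in
theorem preimage_toProd_triangle : toProd ⁻¹' triangle =
    (proj 0 : ℝ² →L[ℝ] ℝ) ⁻¹' Ici 0 ∩ (proj 0 + proj 1 : ℝ² →L[ℝ] ℝ) ⁻¹' Iic 1 ∩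
      (proj 0 - proj 1 : ℝ² →L[ℝ] ℝ) ⁻¹' Iic 1 := by
  ext p
  simp [triangle, toProd, and_assoc]

theorem frontier_preimage_toProd_triangle : frontier (toProd ⁻¹' triangle) =
    toProd ⁻¹' triangle ∩ {p | p 0 = 0} ∪ toProd ⁻¹' triangle ∩ {p | p 0 + p 1 = 1} ∪
      toProd ⁻¹' triangle ∩ {p | p 0 - p 1 = 1} := by
  have hclosed : IsClosed (toProd ⁻¹' triangle) := by
    rw [preimage_toProd_triangle]
    exact ((isClosed_Ici.preimage (ContinuousLinearMap.continuous _)).inter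
      (isClosed_Iic.preimage (ContinuousLinearMap.continuous _))).inter
      (isClosed_Iic.preimage (ContinuousLinearMap.continuous _))
  have hinterior := fun (ℓ : ℝ² →L[ℝ] ℝ) (hℓ : ℓ (EuclideanSpace.single 0 1) = 1) =>
    ℓ.interior_preimage_of_apply_eq_one hℓ
  rw [frontier, hclosed.closure_eq, preimage_toProd_triangle, interior_inter, interior_inter,
    hinterior _ (by simp), hinterior _ (by simp), hinterior _ (by simp),
    interior_Ici, interior_Iic, ← preimage_toProd_triangle, ← inter_union_distrib_left,
    ← inter_union_distrib_left]
  ext p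
  simp only [mem_sdiff, mem_inter_iff, mem_union, mem_preimage, mem_Ioi, mem_Iio, mem_ofPred_eq,
    toProd_apply, triangle, add_apply, sub_apply, PiLp.proj_apply]
  refine and_congr_right fun ⟨h₁, h₂, h₃⟩ => ?_
  rw [h₁.lt_iff_ne, h₂.lt_iff_ne, h₃.lt_iff_ne]
  tauto

theorem convexHull_eq_preimage_toProd_triangle :
    convexHull ℝ {(!₂[0, -1] : ℝ²), !₂[0, 1], !₂[1, 0]} = toProd ⁻¹' triangle := by
  apply Subset.antisymm
  · refine convexHull_min ?_ ?_
    · rintro p (rfl | rfl | rfl) <;> norm_num [triangle, toProd_apply]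
    · rw [preimage_toProd_triangle]
      exact (((convex_Ici 0).linear_preimage
        (EuclideanSpace.proj 0 : ℝ² →L[ℝ] ℝ).toLinearMap).inter
        ((convex_Iic 1).linear_preimage (_ : ℝ² →L[ℝ] ℝ).toLinearMap)).inter
        ((convex_Iic 1).linear_preimage (_ : ℝ² →L[ℝ] ℝ).toLinearMap)
  · rintro p ⟨h₁, h₂, h₃⟩
    simp only [toProd_apply] at h₁ h₂ h₃
    have hp : p = ∑ i, ![(1 - p 0 - p 1) / 2, (1 - p 0 + p 1) / 2, p 0] i •
        ![(!₂[0, -1] : ℝ²), !₂[0, 1], !₂[1, 0]] i := by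
      ext i
      fin_cases i <;> simp [Fin.sum_univ_three]
      ring
    rw [hp]
    refine (convex_convexHull ℝ _).sum_mem (fun i _ => ?_) ?_
      (fun i _ => subset_convexHull ℝ _ ?_)
    · fin_cases i <;> simp <;> linarith
    · simp [Fin.sum_univ_three]; ring
    · fin_cases i <;> simp

theorem segment_eq_left_side :
    segment ℝ (!₂[0, -1] : ℝ²) !₂[0, 1] = toProd ⁻¹' triangle ∩ {p | p 0 = 0} := by
  rw [← convexHull_eq_preimage_toProd_triangle, pair_comm, insert_comm]
  refine (convexHull_insert_pair_inter_eq_segment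
    (EuclideanSpace.proj 0 : ℝ² →L[ℝ] ℝ).toLinearMap ?_ ?_ ?_).symm <;> norm_num

theorem segment_eq_upper_side :
    segment ℝ (!₂[0, 1] : ℝ²) !₂[1, 0] = toProd ⁻¹' triangle ∩ {p | p 0 + p 1 = 1} := by
  rw [← convexHull_eq_preimage_toProd_triangle]
  refine (convexHull_insert_pair_inter_eq_segment
    (EuclideanSpace.proj 0 + EuclideanSpace.proj 1 : ℝ² →L[ℝ] ℝ).toLinearMap ?_ ?_ ?_).symm <;>
    norm_num

theorem segment_eq_lower_side :
    segment ℝ (!₂[1, 0] : ℝ²) !₂[0, -1] = toProd ⁻¹' triangle ∩ {p | p 0 - p 1 = 1} := by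
  rw [← convexHull_eq_preimage_toProd_triangle, insert_comm, pair_comm]
  refine (convexHull_insert_pair_inter_eq_segment
    (EuclideanSpace.proj 0 - EuclideanSpace.proj 1 : ℝ² →L[ℝ] ℝ).toLinearMap ?_ ?_ ?_).symm <;>
    norm_num

theorem frontier_preimage_toProd_triangle_eq_union_segment : frontier (toProd ⁻¹' triangle) =
    segment ℝ !₂[0, -1] !₂[0, 1] ∪ segment ℝ !₂[0, 1] !₂[1, 0] ∪ segment ℝ !₂[1, 0] !₂[0, -1] := by
  rw [frontier_preimage_toProd_triangle, segment_eq_left_side, segment_eq_upper_side,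
    segment_eq_lower_side]

instance : NullSingletonClass (μH[1] : Measure ℝ²) :=
  Measure.nullSingletonClass_hausdorff _ one_pos

theorem subsingleton_setOf_coords (α β : ℝ) : {p : ℝ² | p 0 = α ∧ p 1 = β}.Subsingleton := by
  rintro p ⟨hp₀, hp₁⟩ q ⟨hq₀, hq₁⟩
  ext i
  fin_cases i <;> simp [*]

theorem aedisjoint_left_side_upper_side :
    AEDisjoint μH[1] (segment ℝ (!₂[0, -1] : ℝ²) !₂[0, 1]) (segment ℝ !₂[0, 1] !₂[1, 0]) := by
  rw [AEDisjoint, segment_eq_left_side, segment_eq_upper_side]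
  refine ((subsingleton_setOf_coords 0 1).anti ?_).measure_zero _
  rintro p ⟨⟨-, h₀⟩, -, h₁⟩
  simp only [mem_ofPred_eq] at *
  exact ⟨h₀, by linarith⟩

theorem aedisjoint_left_upper_side_lower_side :
    AEDisjoint μH[1] (segment ℝ (!₂[0, -1] : ℝ²) !₂[0, 1] ∪ segment ℝ !₂[0, 1] !₂[1, 0])
      (segment ℝ !₂[1, 0] !₂[0, -1]) := by
  rw [AEDisjoint, segment_eq_left_side, segment_eq_upper_side, segment_eq_lower_side,
    union_inter_distrib_right]
  refine measure_union_null (((subsingleton_setOf_coords 0 (-1)).anti ?_).measure_zero _)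
    (((subsingleton_setOf_coords 1 0).anti ?_).measure_zero _)
  · rintro p ⟨⟨-, h₀⟩, -, h₂⟩
    simp only [mem_ofPred_eq] at *
    exact ⟨h₀, by linarith⟩
  · rintro p ⟨⟨-, h₁⟩, -, h₂⟩
    simp only [mem_ofPred_eq] at *
    exact ⟨by linarith, by linarith⟩

theorem setAverage_frontier_preimage_toProd_triangle :
    ⨍ x in frontier (toProd ⁻¹' triangle), x 0 ∂μH[1] = 1 - √2 / 2 := by
  have hmeas := fun a b : ℝ² => (measurableSet_segment a b).nullMeasurableSet (μ := μH[1])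
  have hint := integrableOn_segment_hausdorffMeasure
    (EuclideanSpace.proj (0 : Fin 2) : ℝ² →L[ℝ] ℝ).continuous
  have hfin : ∀ a b : ℝ², μH[1] (segment ℝ a b) ≠ ∞ := by simp [edist_ne_top]
  have h₁ : dist (!₂[0, -1] : ℝ²) !₂[0, 1] = 2 := by
    norm_num [EuclideanSpace.dist_eq, Real.dist_eq]
  have h₂ : dist (!₂[0, 1] : ℝ²) !₂[1, 0] = √2 := by norm_num [EuclideanSpace.dist_eq]
  have h₃ : dist (!₂[1, 0] : ℝ²) !₂[0, -1] = √2 := by norm_num [EuclideanSpace.dist_eq]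
  have hlength : μH[1].real (frontier (toProd ⁻¹' triangle)) = 2 + 2 * √2 := by
    rw [frontier_preimage_toProd_triangle_eq_union_segment,
      measureReal_union₀ (hmeas _ _) aedisjoint_left_upper_side_lower_side
      (measure_union_ne_top (hfin _ _) (hfin _ _)) (hfin _ _),
      measureReal_union₀ (hmeas _ _) aedisjoint_left_side_upper_side (hfin _ _) (hfin _ _)]
    simp only [measureReal_hausdorffMeasure_segment, h₁, h₂, h₃]
    ring
  have hsides : ∫ x in frontier (toProd ⁻¹' triangle), x 0 ∂μH[1] = √2 := by
    change ∫ x in _, (EuclideanSpace.proj 0 : ℝ² →L[ℝ] ℝ) x ∂μH[1] = _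
    rw [frontier_preimage_toProd_triangle_eq_union_segment,
      setIntegral_union₀ aedisjoint_left_upper_side_lower_side (hmeas _ _)
      ((hint _ _).union (hint _ _)) (hint _ _), setIntegral_union₀ aedisjoint_left_side_upper_side
      (hmeas _ _) (hint _ _) (hint _ _)]
    simp only [integral_segment_hausdorffMeasure_clm, h₁, h₂, h₃]
    norm_num
    ring
  rw [setAverage_eq, hsides, hlength, smul_eq_mul]
  have := Real.sq_sqrt (show (0 : ℝ) ≤ 2 by norm_num)
  field_simp
  nlinarith

theorem setAverage_preimage_toProd_triangle :
    ⨍ p in toProd ⁻¹' triangle, p 0 = 1 / 3 := by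
  rw [setAverage_eq, measurePreserving_toProd.measureReal_preimage
    isCompact_triangle.measurableSet.nullMeasurableSet, measureReal_triangle, inv_one, one_smul,
    ← setIntegral_triangle_fst,
    ← measurePreserving_toProd.setIntegral_preimage_emb toProd.measurableEmbedding (fun q => q.1)]
  rfl

/-- The 45–45–90 triangle with vertices `(0,-1)`, `(0,1)`, `(1,0)` is not of Jensen type:
for the convex function `f (x, y) = x`, the average over the triangle is `1/3`, the average
over its boundary is `1 - √2/2`, and `1/3 > 1 - √2/2`. -/
theorem stmt_0
    (T : Set (EuclideanSpace ℝ (Fin 2)))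
    (hT : T = convexHull ℝ {(!₂[0, -1] : EuclideanSpace ℝ (Fin 2)), !₂[0, 1], !₂[1, 0]})
    (f : EuclideanSpace ℝ (Fin 2) → ℝ) (hf : f = fun x => x 0) :
    (⨍ x in T, f x) = 1 / 3 ∧
    (⨍ x in frontier T, f x ∂(μH[(1 : ℝ)])) = 1 - Real.sqrt 2 / 2 ∧
    (1 : ℝ) / 3 > 1 - Real.sqrt 2 / 2 ∧
    ¬ IsJensenType T := by
  have hT' : T = toProd ⁻¹' triangle := hT.trans convexHull_eq_preimage_toProd_triangle
  have hinterior : (⨍ x in T, f x) = 1 / 3 := by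
    rw [hT', hf]
    exact setAverage_preimage_toProd_triangle
  have hboundary : (⨍ x in frontier T, f x ∂(μH[(1 : ℝ)])) = 1 - √2 / 2 := by
    rw [hT', hf]
    exact setAverage_frontier_preimage_toProd_triangle
  have hlt : (1 : ℝ) / 3 > 1 - √2 / 2 := by
    nlinarith [Real.sq_sqrt (show (0 : ℝ) ≤ 2 by norm_num), Real.sqrt_nonneg 2]
  refine ⟨hinterior, hboundary, hlt, fun hJensen => ?_⟩
  have hconvex : ConvexOn ℝ T f := by
    rw [hf]
    exact (EuclideanSpace.proj 0 : ℝ² →L[ℝ] ℝ).toLinearMap.convexOn (hT ▸ convex_convexHull ℝ _)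
  have hle := hJensen f hconvex
  norm_num [hinterior, hboundary] at hle
  linarith
end

section
/- The unit square [0,1]² is of Jensen-type: for every convex function f : [0,1]² → ℝ, ∫_{[0,1]²} f dx dy ≤ (1/4)(∫_0^1 f(x,0) dx + ∫_0^1 f(x,1) dx + ∫_0^1 f(0,y) dy + ∫_0^1 f(1,y) dy). -/
/-!
Convexity along the vertical segment through `(x, y)` gives
`f (x, y) ≤ (1 - y) f (x, 0) + y f (x, 1)`; integrating in `y` (the Hermite–Hadamard bound) and then
in `x` (Fubini) bounds `∫ f` by half the sum of the integrals over the two horizontal edges.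
Exchanging the coordinates gives the same bound by the vertical edges, and the theorem is the
average of the two.

Integrability comes for free: a convex function on the square is bounded above by its values at the
corners, hence below by reflection through the centre, and it is continuous on the interior, whose
complement in the square is null.
-/

open MeasureTheory Set intervalIntegral Bornology

theorem ConvexOn.bddBelow_image_of_symmetric {E : Type*} [AddCommGroup E] [Module ℝ E]
    {s : Set E} {f : E → ℝ} {c : E}
    (hf : ConvexOn ℝ s f) (hsymm : ∀ x ∈ s, 2 • c - x ∈ s)
    (hb : BddAbove (f '' s)) : BddBelow (f '' s) := by
  obtain ⟨M, hM⟩ := hb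
  refine ⟨2 * f c - M, ?_⟩
  rintro _ ⟨x, hx, rfl⟩
  have hmid : (1 / 2 : ℝ) • x + (1 / 2 : ℝ) • (2 • c - x) = c := by
    rw [smul_sub, two_smul, smul_add, ← add_smul]; abel_nf; norm_num
  have hconv := hf.2 hx (hsymm x hx) (by norm_num : (0 : ℝ) ≤ 1 / 2)
    (by norm_num : (0 : ℝ) ≤ 1 / 2) (by norm_num)
  rw [hmid, smul_eq_mul, smul_eq_mul] at hconv
  linarith [hM (mem_image_of_mem f (hsymm x hx))]

section Integrability

variable {E : Type*} [NormedAddCommGroup E] [NormedSpace ℝ E] [MeasurableSpace E] [BorelSpace E]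
  [FiniteDimensional ℝ E] (μ : Measure E) [μ.IsAddHaarMeasure] {s t : Set E} {f : E → ℝ}

theorem ConvexOn.aestronglyMeasurable_restrict (hf : ConvexOn ℝ s f) :
    AEStronglyMeasurable f (μ.restrict s) := by
  rw [← Measure.restrict_congr_set (interior_ae_eq_of_null_frontier (hf.1.addHaar_frontier μ))]
  exact hf.continuousOn_interior.aestronglyMeasurable isOpen_interior.measurableSet

theorem ConvexOn.integrableOn_of_isBounded (hf : ConvexOn ℝ s f) (hs : μ s ≠ ⊤)
    (hb : IsBounded (f '' s)) : IntegrableOn f s μ := by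
  obtain ⟨C, hC⟩ := isBounded_iff_forall_norm_le.1 hb
  refine ⟨hf.aestronglyMeasurable_restrict μ, .restrict_of_bounded (C := C) hs.lt_top ?_⟩
  filter_upwards [ae_restrict_mem₀ (hf.1.nullMeasurableSet μ)] with x hx
  exact hC _ (mem_image_of_mem f hx)

theorem ConvexOn.integrableOn_convexHull {c : E} (ht : t.Finite)
    (hf : ConvexOn ℝ (convexHull ℝ t) f)
    (hsymm : ∀ x ∈ convexHull ℝ t, 2 • c - x ∈ convexHull ℝ t) :
    IntegrableOn f (convexHull ℝ t) μ := by
  have hAbove : BddAbove (f '' convexHull ℝ t) :=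
    ConvexOn.bddAbove_convexHull (subset_convexHull ℝ t) hf (ht.image f).bddAbove
  refine hf.integrableOn_of_isBounded μ (ht.isCompact_convexHull ℝ).measure_lt_top.ne ?_
  exact isBounded_iff_bddBelow_bddAbove.2 ⟨hf.bddBelow_image_of_symmetric hsymm hAbove, hAbove⟩

end Integrability

theorem Icc_eq_convexHull_pair {a b : ℝ} (hab : a ≤ b) : Icc a b = convexHull ℝ {a, b} := by
  rw [convexHull_pair, segment_eq_Icc hab]

theorem two_smul_midpoint_sub_mem_Icc {a b x : ℝ} (hx : x ∈ Icc a b) :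
    2 • ((a + b) / 2) - x ∈ Icc a b := by
  rw [two_smul]; constructor <;> linarith [hx.1, hx.2]

theorem ConvexOn.integrableOn_Icc {a b : ℝ} {g : ℝ → ℝ} (hg : ConvexOn ℝ (Icc a b) g) :
    IntegrableOn g (Icc a b) := by
  rcases le_or_gt a b with hab | hba
  · rw [Icc_eq_convexHull_pair hab] at hg ⊢
    refine hg.integrableOn_convexHull volume (toFinite _) (c := (a + b) / 2) ?_
    simpa only [← Icc_eq_convexHull_pair hab] using fun x => two_smul_midpoint_sub_mem_Icc
  · simp [Icc_eq_empty_of_lt hba]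

theorem ConvexOn.integrableOn_Icc_prod_Icc {a b c d : ℝ} {f : ℝ × ℝ → ℝ} (hab : a ≤ b)
    (hcd : c ≤ d) (hf : ConvexOn ℝ (Icc a b ×ˢ Icc c d) f) :
    IntegrableOn f (Icc a b ×ˢ Icc c d) := by
  have hR : Icc a b ×ˢ Icc c d = convexHull ℝ ({a, b} ×ˢ {c, d}) := by
    rw [convexHull_prod, ← Icc_eq_convexHull_pair hab, ← Icc_eq_convexHull_pair hcd]
  rw [hR] at hf ⊢
  refine hf.integrableOn_convexHull volume ((toFinite _).prod (toFinite _))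
    (c := ((a + b) / 2, (c + d) / 2)) ?_
  rw [← hR]
  rintro ⟨x, y⟩ ⟨hx, hy⟩
  exact ⟨two_smul_midpoint_sub_mem_Icc hx, two_smul_midpoint_sub_mem_Icc hy⟩

theorem ConvexOn.le_chord {a b x : ℝ} {g : ℝ → ℝ} (hab : a < b) (hg : ConvexOn ℝ (Icc a b) g)
    (hx : x ∈ Icc a b) : g x ≤ g a + (g b - g a) / (b - a) * (x - a) := by
  have hba : 0 < b - a := sub_pos.2 hab
  have h := hg.2 (left_mem_Icc.2 hab.le) (right_mem_Icc.2 hab.le)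
    (div_nonneg (sub_nonneg.2 hx.2) hba.le) (div_nonneg (sub_nonneg.2 hx.1) hba.le)
    (by field_simp; ring)
  have hpt : ((b - x) / (b - a)) • a + ((x - a) / (b - a)) • b = x := by
    simp only [smul_eq_mul]; field_simp; ring
  rw [hpt, smul_eq_mul, smul_eq_mul] at h
  calc g x ≤ (b - x) / (b - a) * g a + (x - a) / (b - a) * g b := h
    _ = g a + (g b - g a) / (b - a) * (x - a) := by field_simp; ring

theorem ConvexOn.intervalIntegral_le_endpoint_average {a b : ℝ} {g : ℝ → ℝ} (hab : a ≤ b)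
    (hg : ConvexOn ℝ (Icc a b) g) : ∫ x in a..b, g x ≤ (b - a) * ((g a + g b) / 2) := by
  rcases hab.eq_or_lt with rfl | hlt
  · simp
  have hchord :
      IntervalIntegrable (fun x => g a + (g b - g a) / (b - a) * (x - a)) volume a b := by
    apply Continuous.intervalIntegrable; fun_prop
  calc ∫ x in a..b, g x ≤ ∫ x in a..b, (g a + (g b - g a) / (b - a) * (x - a)) :=
        integral_mono_on hab ((intervalIntegrable_iff_integrableOn_Icc_of_le hab).2
          hg.integrableOn_Icc) hchord fun x hx => hg.le_chord hlt hx
    _ = (b - a) * ((g a + g b) / 2) := by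
        rw [intervalIntegral.integral_add intervalIntegrable_const
            (by apply Continuous.intervalIntegrable; fun_prop),
          intervalIntegral.integral_const_mul, integral_comp_sub_right (fun x => x), integral_id,
          intervalIntegral.integral_const, smul_eq_mul]
        field_simp
        ring

section Slices

variable {𝕜 E F β : Type*} [Field 𝕜] [LinearOrder 𝕜] [AddCommGroup E] [Module 𝕜 E]
  [AddCommGroup F] [Module 𝕜 F] [AddCommMonoid β] [PartialOrder β] [SMul 𝕜 β]
  {s : Set E} {t : Set F} {f : E × F → β}

theorem ConvexOn.comp_prodMk_left {x : E} (hf : ConvexOn 𝕜 (s ×ˢ t) f) (hx : x ∈ s) :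
    ConvexOn 𝕜 t (fun y => f (x, y)) := by
  have h : ConvexOn 𝕜 (Prod.mk x ⁻¹' s ×ˢ t) (fun y => f (x, y)) :=
    hf.comp_affineMap ((AffineMap.const 𝕜 F x).prod (AffineMap.id 𝕜 F))
  rwa [mk_preimage_prod_right hx] at h

theorem ConvexOn.comp_swap (hf : ConvexOn 𝕜 (s ×ˢ t) f) :
    ConvexOn 𝕜 (t ×ˢ s) (f ∘ Prod.swap) := by
  have h : ConvexOn 𝕜 (Prod.swap ⁻¹' s ×ˢ t) (f ∘ Prod.swap) :=
    hf.comp_linearMap (LinearEquiv.prodComm 𝕜 F E).toLinearMap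
  rwa [preimage_swap_prod] at h

theorem ConvexOn.comp_prodMk_right {y : F} (hf : ConvexOn 𝕜 (s ×ˢ t) f) (hy : y ∈ t) :
    ConvexOn 𝕜 s (fun x => f (x, y)) :=
  hf.comp_swap.comp_prodMk_left hy

end Slices

theorem ConvexOn.setIntegral_Icc_prod_Icc_le {a b c d : ℝ} {f : ℝ × ℝ → ℝ} (hab : a ≤ b)
    (hcd : c ≤ d) (hf : ConvexOn ℝ (Icc a b ×ˢ Icc c d) f) :
    ∫ p in Icc a b ×ˢ Icc c d, f p ≤
      (d - c) / 2 * ((∫ x in a..b, f (x, c)) + ∫ x in a..b, f (x, d)) := by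
  have hint : IntegrableOn f (Icc a b ×ˢ Icc c d) (volume.prod volume) := by
    rw [← Measure.volume_eq_prod]
    exact hf.integrableOn_Icc_prod_Icc hab hcd
  have hint' : Integrable f ((volume.restrict (Icc a b)).prod (volume.restrict (Icc c d))) := by
    rwa [Measure.prod_restrict]
  have hinner : ∀ x ∈ Icc a b,
      ∫ y in Icc c d, f (x, y) ≤ (d - c) / 2 * f (x, c) + (d - c) / 2 * f (x, d) := by
    intro x hx
    rw [integral_Icc_eq_integral_Ioc, ← intervalIntegral.integral_of_le hcd]
    linarith [(hf.comp_prodMk_left hx).intervalIntegral_le_endpoint_average hcd]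
  have hbot :=
    (hf.comp_prodMk_right (left_mem_Icc.2 hcd)).integrableOn_Icc.const_mul ((d - c) / 2)
  have htop :=
    (hf.comp_prodMk_right (right_mem_Icc.2 hcd)).integrableOn_Icc.const_mul ((d - c) / 2)
  rw [intervalIntegral.integral_of_le hab, intervalIntegral.integral_of_le hab,
    ← integral_Icc_eq_integral_Ioc, ← integral_Icc_eq_integral_Ioc, mul_add,
    ← MeasureTheory.integral_const_mul, ← MeasureTheory.integral_const_mul,
    ← integral_add hbot htop, Measure.volume_eq_prod, setIntegral_prod f hint]
  exact setIntegral_mono_on hint'.integral_prod_left (hbot.add htop) measurableSet_Icc hinner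

/-- The unit square `[0,1]²` is of Jensen type: for every convex `f : [0,1]² → ℝ`,
`∫_{[0,1]²} f ≤ (1/4)(∫_0^1 f(x,0) dx + ∫_0^1 f(x,1) dx + ∫_0^1 f(0,y) dy + ∫_0^1 f(1,y) dy)`. -/
theorem stmt_3 (f : ℝ × ℝ → ℝ)
    (hf : ConvexOn ℝ (Set.Icc (0 : ℝ) 1 ×ˢ Set.Icc (0 : ℝ) 1) f) :
    ∫ p in Set.Icc (0 : ℝ) 1 ×ˢ Set.Icc (0 : ℝ) 1, f p ≤
      (1 / 4) * ((∫ x in (0 : ℝ)..1, f (x, 0)) + (∫ x in (0 : ℝ)..1, f (x, 1)) +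
        (∫ y in (0 : ℝ)..1, f (0, y)) + (∫ y in (0 : ℝ)..1, f (1, y))) := by
  have horizontal := hf.setIntegral_Icc_prod_Icc_le zero_le_one zero_le_one
  have vertical := hf.comp_swap.setIntegral_Icc_prod_Icc_le zero_le_one zero_le_one
  simp only [Function.comp_apply, Prod.swap_prod_mk] at vertical
  rw [Measure.volume_eq_prod, setIntegral_prod_swap, ← Measure.volume_eq_prod] at vertical
  linarith
end
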